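/- Let A: S^d → R^m be a linear operator on symmetric d×d matrices satisfying the restricted isometry property of order r+2 with constant δ. Then for every symmetric matrix Z of rank at most r, the spectral norm bound ‖(I − A*A)(Z)‖ ≤ δ ‖Z‖_F holds. -/

import Mathlib

open scoped BigOperators
open Matrix

noncomputable def frobNorm {d₁ d₂ : ℕ} (A : Matrix (Fin d₁) (Fin d₂) ℝ) : ℝ :=
  Real.sqrt (∑ i, ∑ j, A i j ^ 2)

noncomputable def vecNorm {m : ℕ} (y : Fin m → ℝ) : ℝ :=
  Real.sqrt (∑ i, y i ^ 2)

noncomputable def specNorm {d₁ d₂ : ℕ} (A : Matrix (Fin d₁) (Fin d₂) ℝ) : ℝ :=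
  ‖LinearMap.toContinuousLinearMap (Matrix.toEuclideanLin A)‖

noncomputable def tinner {d : ℕ} (A B : Matrix (Fin d) (Fin d) ℝ) : ℝ :=
  (A * Bᵀ).trace

noncomputable def sigmaMin {d₁ d₂ : ℕ} (A : Matrix (Fin d₁) (Fin d₂) ℝ) : ℝ :=
  sInf {s : ℝ | 0 < s ∧ ∃ i, s ^ 2 = (Matrix.isHermitian_conjTranspose_mul_self A).eigenvalues i}

noncomputable def projPerp {d : ℕ} (w : Fin d → ℝ) (Z : Matrix (Fin d) (Fin d) ℝ) :
    Matrix (Fin d) (Fin d) ℝ :=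
  Z - tinner (Matrix.vecMulVec w w) Z • Matrix.vecMulVec w w

/-!
The matrix `M = Z - 𝒜* 𝒜 Z` is symmetric, so its spectral norm is the supremum of `|uᵀ M u|`
over unit vectors `u` (Rayleigh quotient), and `uᵀ M u = ⟨Z, u uᵀ⟩ - ⟨𝒜 Z, 𝒜 (u uᵀ)⟩`.
Every matrix in the span of `Z` and the rank-one `u uᵀ` has rank at most `r + 1`, so `𝒜` is a
`δ`-near isometry on that plane; polarization, i.e. comparing `𝒜` on `‖Y‖ X ± ‖X‖ Y`, turns this
into `|⟨𝒜 X, 𝒜 Y⟩ - ⟨X, Y⟩| ≤ δ ‖X‖_F ‖Y‖_F`, while `‖u uᵀ‖_F = ‖u‖²`.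
-/

open scoped RealInnerProductSpace

section NearIsometry

variable {E F : Type*} [NormedAddCommGroup E] [InnerProductSpace ℝ E]
  [NormedAddCommGroup F] [InnerProductSpace ℝ F]

theorem norm_smul_add_smul_sq (x y : E) (a b : ℝ) :
    ‖a • x + b • y‖ ^ 2 = a ^ 2 * ‖x‖ ^ 2 + 2 * (a * b) * ⟪x, y⟫ + b ^ 2 * ‖y‖ ^ 2 := by
  rw [norm_add_sq_real, norm_smul, norm_smul, real_inner_smul_left, real_inner_smul_right,
    mul_pow, mul_pow, Real.norm_eq_abs, Real.norm_eq_abs, sq_abs, sq_abs]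
  ring

theorem abs_inner_map_sub_inner_le (T : E →ₗ[ℝ] F) {δ : ℝ} {x y : E}
    (hT : ∀ a b : ℝ, |‖T (a • x + b • y)‖ ^ 2 - ‖a • x + b • y‖ ^ 2| ≤ δ * ‖a • x + b • y‖ ^ 2) :
    |⟪T x, T y⟫ - ⟪x, y⟫| ≤ δ * (‖x‖ * ‖y‖) := by
  rcases (mul_nonneg (norm_nonneg x) (norm_nonneg y)).eq_or_lt with h0 | hpos
  · rcases mul_eq_zero.mp h0.symm with hx | hy
    · simp [norm_eq_zero.mp hx]
    · simp [norm_eq_zero.mp hy]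
  -- compare `T` on `‖y‖ • x ± ‖x‖ • y`, whose squared norms differ by `4 ‖x‖ ‖y‖ ⟪x, y⟫`
  have hp := hT ‖y‖ ‖x‖
  have hm := hT ‖y‖ (-‖x‖)
  simp only [map_add, map_smul, norm_smul_add_smul_sq] at hp hm
  have key : |(‖x‖ * ‖y‖) * (⟪T x, T y⟫ - ⟪x, y⟫)| ≤ (‖x‖ * ‖y‖) * (δ * (‖x‖ * ‖y‖)) := by
    rw [abs_le] at hp hm ⊢
    constructor <;> linarith
  rwa [abs_mul, abs_of_pos hpos, mul_le_mul_iff_right₀ hpos] at key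

end NearIsometry

namespace Matrix

variable {m n R : Type*} [Fintype n] [Field R]

theorem rank_add_le (A B : Matrix m n R) : (A + B).rank ≤ A.rank + B.rank := by
  have hrange : LinearMap.range (A + B).mulVecLin ≤
      LinearMap.range A.mulVecLin ⊔ LinearMap.range B.mulVecLin := by
    rintro _ ⟨v, rfl⟩
    rw [mulVecLin_add]
    exact Submodule.add_mem_sup ⟨v, rfl⟩ ⟨v, rfl⟩
  exact (Submodule.finrank_mono hrange).trans (Submodule.finrank_add_le_finrank_add_finrank _ _)

theorem rank_smul_le [Fintype m] [DecidableEq m] (c : R) (A : Matrix m n R) :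
    (c • A).rank ≤ A.rank := by
  simpa [smul_mul_assoc] using rank_mul_le_right (c • (1 : Matrix m m R)) A

end Matrix

section Frobenius

variable {d : ℕ}

noncomputable def euclideanVec : Matrix (Fin d) (Fin d) ℝ ≃ₗ[ℝ] EuclideanSpace ℝ (Fin d × Fin d) :=
  (ofLinearEquiv ℝ).symm ≪≫ₗ (LinearEquiv.curry ℝ ℝ (Fin d) (Fin d)).symm ≪≫ₗ
    (WithLp.linearEquiv 2 ℝ _).symm

theorem euclideanVec_apply (X : Matrix (Fin d) (Fin d) ℝ) (i j : Fin d) :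
    euclideanVec X (i, j) = X i j := rfl

theorem norm_euclideanVec (X : Matrix (Fin d) (Fin d) ℝ) : ‖euclideanVec X‖ = frobNorm X := by
  rw [EuclideanSpace.norm_eq, Fintype.sum_prod_type, frobNorm]
  simp [euclideanVec_apply]

theorem inner_euclideanVec (X Y : Matrix (Fin d) (Fin d) ℝ) :
    ⟪euclideanVec X, euclideanVec Y⟫ = tinner X Y := by
  rw [EuclideanSpace.inner_eq_star_dotProduct]
  simp [dotProduct, Fintype.sum_prod_type, tinner, trace, mul_apply, euclideanVec_apply, mul_comm]

theorem frobNorm_vecMulVec_self (u : Fin d → ℝ) : frobNorm (vecMulVec u u) = u ⬝ᵥ u := by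
  have hsq : ∑ i, ∑ j, vecMulVec u u i j ^ 2 = (u ⬝ᵥ u) ^ 2 := by
    simp only [vecMulVec_apply, dotProduct, sq, Finset.sum_mul_sum]
    exact Finset.sum_congr rfl fun i _ => Finset.sum_congr rfl fun j _ => by ring
  rw [frobNorm, hsq]
  exact Real.sqrt_sq (Finset.sum_nonneg fun i _ => mul_self_nonneg (u i))

theorem tinner_sub_left (A B C : Matrix (Fin d) (Fin d) ℝ) :
    tinner (A - B) C = tinner A C - tinner B C := by
  rw [tinner, tinner, tinner, Matrix.sub_mul, trace_sub]

theorem tinner_vecMulVec_self (M : Matrix (Fin d) (Fin d) ℝ) (u : Fin d → ℝ) :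
    tinner M (vecMulVec u u) = u ⬝ᵥ M *ᵥ u := by
  simp only [tinner, trace, diag, mul_apply, transpose_vecMulVec, vecMulVec_apply, dotProduct,
    mulVec, Finset.mul_sum]
  exact Finset.sum_congr rfl fun i _ => Finset.sum_congr rfl fun j _ => by ring

end Frobenius

def IsRestrictedIsometry {d m : ℕ} (𝒜 : Matrix (Fin d) (Fin d) ℝ →ₗ[ℝ] (Fin m → ℝ)) (k : ℕ)
    (δ : ℝ) : Prop :=
  ∀ Z : Matrix (Fin d) (Fin d) ℝ, Z.IsSymm → Z.rank ≤ k →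
    (1 - δ) * frobNorm Z ^ 2 ≤ ∑ i, 𝒜 Z i ^ 2 ∧ ∑ i, 𝒜 Z i ^ 2 ≤ (1 + δ) * frobNorm Z ^ 2

theorem IsRestrictedIsometry.abs_dotProduct_sub_tinner_le {d m k : ℕ}
    {𝒜 : Matrix (Fin d) (Fin d) ℝ →ₗ[ℝ] (Fin m → ℝ)} {δ : ℝ} (h𝒜 : IsRestrictedIsometry 𝒜 k δ)
    {X Y : Matrix (Fin d) (Fin d) ℝ} (hX : X.IsSymm) (hY : Y.IsSymm) (hk : X.rank + Y.rank ≤ k) :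
    |𝒜 X ⬝ᵥ 𝒜 Y - tinner X Y| ≤ δ * (frobNorm X * frobNorm Y) := by
  let T := (WithLp.linearEquiv 2 ℝ (Fin m → ℝ)).symm.toLinearMap ∘ₗ 𝒜 ∘ₗ
    euclideanVec.symm.toLinearMap
  have hT : ∀ Z, T (euclideanVec Z) = WithLp.toLp 2 (𝒜 Z) := fun Z => by simp [T]
  have hnear : ∀ a b : ℝ, |‖T (a • euclideanVec X + b • euclideanVec Y)‖ ^ 2 -
      ‖a • euclideanVec X + b • euclideanVec Y‖ ^ 2| ≤
        δ * ‖a • euclideanVec X + b • euclideanVec Y‖ ^ 2 := by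
    intro a b
    have hrank : (a • X + b • Y).rank ≤ k :=
      (rank_add_le _ _).trans (by grw [rank_smul_le, rank_smul_le]; exact hk)
    obtain ⟨hlo, hhi⟩ := h𝒜 _ ((hX.smul a).add (hY.smul b)) hrank
    rw [← map_smul, ← map_smul, ← map_add, hT, EuclideanSpace.real_norm_sq_eq,
      norm_euclideanVec, abs_sub_le_iff]
    constructor <;> linarith
  have := abs_inner_map_sub_inner_le T hnear
  rwa [hT, hT, EuclideanSpace.inner_toLp_toLp, star_trivial, dotProduct_comm, inner_euclideanVec,
    norm_euclideanVec, norm_euclideanVec] at this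

theorem specNorm_le_of_abs_dotProduct_mulVec_le {d : ℕ} {M : Matrix (Fin d) (Fin d) ℝ}
    (hM : M.IsSymm) {C : ℝ} (hC : 0 ≤ C) (h : ∀ u, |u ⬝ᵥ M *ᵥ u| ≤ C * (u ⬝ᵥ u)) :
    specNorm M ≤ C := by
  have hsymm : (toEuclideanLin M).IsSymmetric := isSymmetric_toEuclideanLin_iff.mpr <| by
    rwa [IsHermitian, conjTranspose_eq_transpose_of_trivial]
  rw [specNorm, ContinuousLinearMap.norm_eq_iSup_rayleighQuotient _ hsymm]
  refine ciSup_le fun x => ?_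
  have hquad : ⟪toEuclideanLin M x, x⟫ = x.ofLp ⬝ᵥ M *ᵥ x.ofLp := by
    rw [toLpLin_apply, EuclideanSpace.inner_eq_star_dotProduct, star_trivial]
  have hnorm : ‖x‖ ^ 2 = x.ofLp ⬝ᵥ x.ofLp := by
    rw [← real_inner_self_eq_norm_sq, EuclideanSpace.inner_eq_star_dotProduct, star_trivial]
  rcases eq_or_ne x 0 with rfl | hx0
  · simpa using hC
  have hx : 0 < ‖x‖ ^ 2 := by positivity
  rw [ContinuousLinearMap.rayleighQuotient, ContinuousLinearMap.reApplyInnerSelf_apply,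
    LinearMap.coe_toContinuousLinearMap', RCLike.re_to_real, hquad, abs_div, abs_of_pos hx,
    div_le_iff₀ hx, hnorm]
  exact h x.ofLp

theorem statement2 {d m r : ℕ} (δ : ℝ) (hδ : 0 ≤ δ)
    (𝒜 : Matrix (Fin d) (Fin d) ℝ →ₗ[ℝ] (Fin m → ℝ))
    (𝒜s : (Fin m → ℝ) →ₗ[ℝ] Matrix (Fin d) (Fin d) ℝ)
    (hsym : ∀ y, (𝒜s y).IsSymm)
    (hadj : ∀ (y : Fin m → ℝ) (Z : Matrix (Fin d) (Fin d) ℝ), Z.IsSymm →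
      tinner (𝒜s y) Z = ∑ i, y i * 𝒜 Z i)
    (hRIP : ∀ Z : Matrix (Fin d) (Fin d) ℝ, Z.IsSymm → Z.rank ≤ r + 2 →
      (1 - δ) * frobNorm Z ^ 2 ≤ ∑ i, 𝒜 Z i ^ 2 ∧
        ∑ i, 𝒜 Z i ^ 2 ≤ (1 + δ) * frobNorm Z ^ 2)
    (Z : Matrix (Fin d) (Fin d) ℝ) (hZ : Z.IsSymm) (hr : Z.rank ≤ r) :
    specNorm (Z - 𝒜s (𝒜 Z)) ≤ δ * frobNorm Z := by
  refine specNorm_le_of_abs_dotProduct_mulVec_le (hZ.sub (hsym _))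
    (mul_nonneg hδ (Real.sqrt_nonneg _)) fun u => ?_
  have hW : (vecMulVec u u).IsSymm := transpose_vecMulVec u u
  have hrank : Z.rank + (vecMulVec u u).rank ≤ r + 2 := by
    have := rank_vecMulVec_le u u
    omega
  calc |u ⬝ᵥ (Z - 𝒜s (𝒜 Z)) *ᵥ u|
      = |𝒜 Z ⬝ᵥ 𝒜 (vecMulVec u u) - tinner Z (vecMulVec u u)| := by
        rw [← tinner_vecMulVec_self, tinner_sub_left, hadj _ _ hW, abs_sub_comm]; rfl
    _ ≤ δ * (frobNorm Z * frobNorm (vecMulVec u u)) :=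
        IsRestrictedIsometry.abs_dotProduct_sub_tinner_le hRIP hZ hW hrank
    _ = δ * frobNorm Z * (u ⬝ᵥ u) := by rw [frobNorm_vecMulVec_self, mul_assoc]
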